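/- For real numbers L₁ and M, the two conditions L₁ > 0 and L₁ + (4/3)M > 0 hold if and only if there exists α ∈ ℝ such that L₁ + αM > 0, 2L₁ − αM > 0, and L₁ + (α/6)M + (5(2−α)/3)M > 0. -/
import Mathlib


/-- The coercivity region with Dirichlet boundary conditions:
`L₁ > 0 ∧ L₁ + (4/3)M > 0` holds iff there is a splitting parameter `α` with
`L₁ + αM > 0`, `2L₁ − αM > 0` and `L₁ + (α/6)M + (5(2−α)/3)M > 0`. -/
theorem coercivity_union_iff (L1 M : ℝ) :
    (0 < L1 ∧ 0 < L1 + (4/3) * M) ↔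
    (∃ α : ℝ, 0 < L1 + α * M ∧ 0 < 2 * L1 - α * M ∧
      0 < L1 + (α/6) * M + (5 * (2 - α) / 3) * M) := by
  constructor
  · rintro ⟨h1, h2⟩
    by_cases hM : 0 ≤ M
    · refine ⟨0, ?_, ?_, ?_⟩ <;> nlinarith
    · push_neg at hM
      have hM' : M ≠ 0 := ne_of_lt hM
      have key : L1 * M * M⁻¹ = L1 := by field_simp
      refine ⟨10/9 - L1 / (6 * M), ?_, ?_, ?_⟩ <;>
        ring_nf <;> rw [key] <;> linarith
  · rintro ⟨α, h1, h2, h3⟩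
    constructor <;> nlinarith
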